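/- Let G be a deterministic presentation over a finite alphabet Σ with n vertices. Then ⟨G⟩ is a shift of finite type if and only if ⟨G⟩ is 2^{2n}-step. -/

import Mathlib

/-- A labeled graph over vertex type `V` and alphabet `A`, given by its
labeled-edge relation: `Edge p a q` means there is an edge labeled `a`
from `p` to `q`. -/
structure LabeledGraph (V A : Type) where
  Edge : V → A → V → Prop

namespace LabeledGraph

variable {V A : Type}

/-- `G.Walk p w q` : there is a (finite) path from `p` to `q` labeled `w`. -/
def Walk (G : LabeledGraph V A) : V → List A → V → Prop
  | p, [], q => p = q
  | p, a :: w, q => ∃ r, G.Edge p a r ∧ Walk G r w q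

/-- The follower set of a vertex: labels of finite paths starting at `q`. -/
def follower (G : LabeledGraph V A) (q : V) : Set (List A) :=
  { w | ∃ q', G.Walk q w q' }

/-- The transition action on sets of vertices: `S·w`. -/
def transSet (G : LabeledGraph V A) (S : Set V) (w : List A) : Set V :=
  { q' | ∃ q ∈ S, G.Walk q w q' }

/-- `G` is deterministic (right-resolving). -/
def Deterministic (G : LabeledGraph V A) : Prop :=
  ∀ p a q q', G.Edge p a q → G.Edge p a q' → q = q'

/-- `G` is essential: every vertex has an outgoing and an incoming edge. -/
def Essential (G : LabeledGraph V A) : Prop :=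
  ∀ q, (∃ a r, G.Edge q a r) ∧ (∃ a p, G.Edge p a q)

/-- The sofic shift presented by `G`: labels of bi-infinite paths. -/
def shift (G : LabeledGraph V A) : Set (ℤ → A) :=
  { x | ∃ v : ℤ → V, ∀ j : ℤ, G.Edge (v j) (x j) (v (j + 1)) }

/-- `w` is a synchronizing word for `G`: `Q_G · w` is a singleton. -/
def SyncWord (G : LabeledGraph V A) (w : List A) : Prop :=
  ∃ r, G.transSet Set.univ w = {r}

/-- A vertex `q` is synchronizing: some word synchronizes to `q`. -/
def SyncVertex (G : LabeledGraph V A) (q : V) : Prop :=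
  ∃ w, G.transSet Set.univ w = {q}

/-- `G` is synchronizing: every vertex is synchronizing. -/
def Synchronizing (G : LabeledGraph V A) : Prop :=
  ∀ q, G.SyncVertex q

/-- `G` is follower-separated. -/
def FollowerSeparated (G : LabeledGraph V A) : Prop :=
  ∀ p q, G.follower p = G.follower q → p = q

/-- `G` is irreducible (strongly connected). -/
def StronglyConnected (G : LabeledGraph V A) : Prop :=
  ∀ p q, ∃ w, G.Walk p w q

/-- `q` is reachable from `p`. -/
def Reachable (G : LabeledGraph V A) (p q : V) : Prop :=
  ∃ w, G.Walk p w q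

/-- `C` is an irreducible component: an equivalence class of mutual reachability. -/
def IsIrredComponent (G : LabeledGraph V A) (C : Set V) : Prop :=
  ∃ p, C = { q | G.Reachable p q ∧ G.Reachable q p }

/-- `C` is terminal: everything reachable from `C` lies in `C`. -/
def TerminalSet (G : LabeledGraph V A) (C : Set V) : Prop :=
  ∀ p ∈ C, ∀ q, G.Reachable p q → q ∈ C

/-- `C` is initial: everything that reaches `C` lies in `C`. -/
def InitialSet (G : LabeledGraph V A) (C : Set V) : Prop :=
  ∀ q ∈ C, ∀ p, G.Reachable p q → p ∈ C

/-- Subgraph induced by a set `P` of vertices. -/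
def induce (G : LabeledGraph V A) (P : Set V) : LabeledGraph P A where
  Edge := fun p a q => G.Edge p.1 a q.1

/-- The graph `Ĝ`: vertices are ordered pairs of distinct vertices of `G`,
with an edge labeled `a` from `(p₁,p₂)` to `(q₁,q₂)` iff `G` has edges labeled
`a` from `p₁` to `q₁` and from `p₂` to `q₂`. -/
def pairGraph (G : LabeledGraph V A) : LabeledGraph { pq : V × V // pq.1 ≠ pq.2 } A where
  Edge := fun x a y => G.Edge x.1.1 a y.1.1 ∧ G.Edge x.1.2 a y.1.2

end LabeledGraph

/-- The word `w` appears in the bi-infinite sequence `x`. -/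
def AppearsIn {A : Type} (w : List A) (x : ℤ → A) : Prop :=
  ∃ i : ℤ, ∀ n : Fin w.length, x (i + (n : ℕ)) = w.get n

/-- The language of a subset of the full shift: all finite words appearing
in some point of `X`. -/
def lang {A : Type} (X : Set (ℤ → A)) : Set (List A) :=
  { w | ∃ x ∈ X, AppearsIn w x }

/-- `X` is a shift space. -/
def IsShiftSpace {A : Type} (X : Set (ℤ → A)) : Prop :=
  ∃ F : Set (List A), X = { x | ∀ w ∈ F, ¬ AppearsIn w x }

/-- `X` is a shift of finite type. -/
def IsSFT {A : Type} (X : Set (ℤ → A)) : Prop :=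
  ∃ F : Set (List A), F.Finite ∧ X = { x | ∀ w ∈ F, ¬ AppearsIn w x }

/-- `w` is intrinsically synchronizing for `X`. -/
def IntrinsicallySync {A : Type} (X : Set (ℤ → A)) (w : List A) : Prop :=
  w ∈ lang X ∧ ∀ u v, u ++ w ∈ lang X → w ++ v ∈ lang X → u ++ (w ++ v) ∈ lang X

/-- `X` is an irreducible shift space. -/
def IrreducibleShift {A : Type} (X : Set (ℤ → A)) : Prop :=
  ∀ u ∈ lang X, ∀ v ∈ lang X, ∃ w, u ++ (w ++ v) ∈ lang X

/-- The follower set of a word `u` in `X`. -/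
def followerX {A : Type} (X : Set (ℤ → A)) (u : List A) : Set (List A) :=
  { w | u ++ w ∈ lang X }

/-- `X` is `M`-step: every word of `B(X)` of length at least `M` is
intrinsically synchronizing for `X`. -/
def MStep {A : Type} (X : Set (ℤ → A)) (M : ℕ) : Prop :=
  ∀ w ∈ lang X, M ≤ w.length → IntrinsicallySync X w

/-!
For an essential presentation a word `w` lies in the language of `⟨G⟩` iff it labels a path, i.e.
iff `Q·w` is nonempty. So whether `u w v` lies in the language depends on `w` only through the
pair `(Q·w, (Q·u)·w)`. A word of length at least `2^(2n)` has two prefixes with the same pair,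
and pumping the factor between them makes the word arbitrarily long without changing the pair:
hence if `⟨G⟩` is `M`-step for some `M`, it is `2^(2n)`-step. An SFT whose forbidden words have
length at most `M` is `M`-step, by splicing two points along a common word of length `M`.
Conversely, if `⟨G⟩` is `M`-step, then a point all of whose windows of length `M + 1` lie in the
language has all its windows in the language, and compactness of `V^ℤ` turns the paths labelled
by these windows into a bi-infinite path.
-/

def window {A : Type} (x : ℤ → A) (i : ℤ) (L : ℕ) : List A :=
  List.ofFn fun t : Fin L => x (i + t)

section Window

variable {A : Type}

@[simp]
theorem length_window (x : ℤ → A) (i : ℤ) (L : ℕ) : (window x i L).length = L := by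
  simp [window]

theorem window_succ (x : ℤ → A) (i : ℤ) (L : ℕ) :
    window x i (L + 1) = x i :: window x (i + 1) L := by
  simp only [window, List.ofFn_succ, Fin.val_zero, Fin.val_succ, Nat.cast_zero, add_zero,
    Nat.cast_succ]
  congr 2
  funext t
  congr 1
  ring

theorem window_add (x : ℤ → A) (i : ℤ) (a b : ℕ) :
    window x i (a + b) = window x i a ++ window x (i + a) b := by
  simp [window, List.ofFn_add, add_assoc]

theorem window_eq_window_iff {x y : ℤ → A} {i j : ℤ} {L : ℕ} :
    window x i L = window y j L ↔ ∀ t < L, x (i + t) = y (j + t) := by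
  simp [window, List.ofFn_inj, funext_iff, Fin.forall_iff]

theorem appearsIn_iff_window {w : List A} {x : ℤ → A} :
    AppearsIn w x ↔ ∃ i, window x i w.length = w := by
  simp [AppearsIn, window, List.ext_getElem_iff, Fin.forall_iff]

theorem appearsIn_append_iff {u v : List A} {x : ℤ → A} :
    AppearsIn (u ++ v) x ↔
      ∃ i, window x i u.length = u ∧ window x (i + u.length) v.length = v := by
  simp only [appearsIn_iff_window, List.length_append, window_add]
  exact exists_congr fun i =>
    ⟨fun h => List.append_inj h (by simp), fun ⟨hu, hv⟩ => by rw [hu, hv]⟩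

theorem appearsIn_of_comp_add {w : List A} {x : ℤ → A} {s : ℤ}
    (h : AppearsIn w fun j => x (j + s)) : AppearsIn w x := by
  obtain ⟨i, hi⟩ := h
  exact ⟨i + s, fun n => by rw [← hi n, add_right_comm]⟩

theorem mem_lang_of_append_left {X : Set (ℤ → A)} {u v : List A} (h : u ++ v ∈ lang X) :
    u ∈ lang X := by
  obtain ⟨x, hx, happ⟩ := h
  obtain ⟨i, hu, -⟩ := appearsIn_append_iff.1 happ
  exact ⟨x, hx, appearsIn_iff_window.2 ⟨i, hu⟩⟩

theorem MStep.window_mem_lang {X : Set (ℤ → A)} {M : ℕ} (hX : MStep X M) {x : ℤ → A}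
    (hx : ∀ i, window x i (M + 1) ∈ lang X) (i : ℤ) (L : ℕ) : window x i L ∈ lang X := by
  rcases le_or_gt (M + 1) L with hL | hL
  · induction L, hL using Nat.le_induction generalizing i with
    | base => exact hx i
    | succ L hL ih =>
      obtain ⟨K, rfl⟩ : ∃ K, L = K + M := ⟨L - M, by omega⟩
      have hw : window x (i + K) M ∈ lang X :=
        mem_lang_of_append_left (v := window x (i + K + M) 1) (by rw [← window_add]; exact hx _)
      have := (hX _ hw (by simp)).2 (window x i K) (window x (i + K + M) 1)
        (by rw [← window_add]; exact ih i) (by rw [← window_add]; exact hx _)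
      rwa [← window_add, ← window_add] at this
  · obtain ⟨k, hk⟩ := Nat.exists_eq_add_of_lt hL
    exact mem_lang_of_append_left (v := window x (i + L) (k + 1)) <| by
      rw [← window_add, ← add_assoc, ← hk]; exact hx i

end Window

def forbiddenShift {A : Type} (F : Set (List A)) : Set (ℤ → A) :=
  { x | ∀ w ∈ F, ¬ AppearsIn w x }

section Forbidden

variable {A : Type} {F : Set (List A)} {M : ℕ}

theorem splice_mem_forbiddenShift (hF : ∀ f ∈ F, f.length ≤ M) {x y : ℤ → A}
    (hx : x ∈ forbiddenShift F) (hy : y ∈ forbiddenShift F) {a c : ℤ} (hac : a + M ≤ c)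
    (hxy : ∀ j, a ≤ j → j < c → x j = y j) :
    (fun j => if j < c then x j else y j) ∈ forbiddenShift F := by
  rintro f hf ⟨b, hb⟩
  have hfM := hF f hf
  by_cases hbc : b + f.length ≤ c
  · refine hx f hf ⟨b, fun n => ?_⟩
    have := n.2
    rw [← hb n]
    exact (if_pos (by omega)).symm
  · refine hy f hf ⟨b, fun n => ?_⟩
    rw [← hb n]
    show y _ = if _ then _ else _
    split_ifs with h
    exacts [(hxy _ (by omega) h).symm, rfl]

theorem mStep_forbiddenShift (hF : ∀ f ∈ F, f.length ≤ M) : MStep (forbiddenShift F) M := by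
  intro w hw hlen
  refine ⟨hw, fun u v ⟨x, hx, hux⟩ ⟨y, hy, hvy⟩ => ?_⟩
  obtain ⟨i, hu, hwx⟩ := appearsIn_append_iff.1 hux
  obtain ⟨k, hwy, hv⟩ := appearsIn_append_iff.1 hvy
  set a := i + u.length
  set y' := fun j => y (j + (k - a))
  have hy' : y' ∈ forbiddenShift F := fun f hf h => hy f hf (appearsIn_of_comp_add h)
  have hxy : ∀ j, a ≤ j → j < a + w.length → x j = y' j := by
    intro j h1 h2
    have := window_eq_window_iff.1 (hwx.trans hwy.symm) (j - a).toNat (by omega)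
    rwa [show a + ((j - a).toNat : ℤ) = j by omega,
      show k + ((j - a).toNat : ℤ) = j + (k - a) by omega] at this
  set z : ℤ → A := fun j => if j < a + w.length then x j else y' j
  have hzx : ∀ j < a + w.length, z j = x j := fun j hj => if_pos hj
  have hzy : ∀ j ≥ a, z j = y' j := fun j hj => by
    by_cases h : j < a + w.length
    · exact (if_pos h).trans (hxy j hj h)
    · exact if_neg h
  refine ⟨z, splice_mem_forbiddenShift hF hx hy' (by omega) hxy,
    appearsIn_append_iff.2 ⟨i, ?_, ?_⟩⟩
  · exact (window_eq_window_iff.2 fun t ht => hzx _ (by omega)).trans hu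
  · rw [List.length_append, window_add]
    congr 1
    · exact (window_eq_window_iff.2 fun t ht => hzx _ (by omega)).trans hwx
    · refine (window_eq_window_iff.2 fun t ht => ?_).trans hv
      rw [hzy _ (by omega)]
      show y _ = y _
      congr 1
      omega

theorem IsSFT.exists_mStep {X : Set (ℤ → A)} (h : IsSFT X) : ∃ M, MStep X M := by
  obtain ⟨F, hF, rfl⟩ := h
  obtain ⟨M, hM⟩ := (hF.image List.length).bddAbove
  exact ⟨M, mStep_forbiddenShift fun f hf => hM ⟨f, hf, rfl⟩⟩

end Forbidden

namespace LabeledGraph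

variable {V A : Type} {G : LabeledGraph V A}

theorem walk_append {p q : V} {u v : List A} :
    G.Walk p (u ++ v) q ↔ ∃ r, G.Walk p u r ∧ G.Walk r v q := by
  induction u generalizing p with
  | nil => simp [Walk]
  | cons a u ih => simp only [List.cons_append, Walk, ih]; aesop

theorem transSet_append (S : Set V) (u v : List A) :
    G.transSet S (u ++ v) = G.transSet (G.transSet S u) v := by
  ext q
  simp only [transSet, Set.mem_ofPred_eq, walk_append]
  aesop

theorem transSet_flatten_replicate {S : Set V} {β : List A} (h : G.transSet S β = S) (k : ℕ) :
    G.transSet S (List.replicate k β).flatten = S := by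
  induction k with
  | zero => ext; simp [transSet, Walk]
  | succ k ih => rw [List.replicate_succ, List.flatten_cons, transSet_append, h, ih]

theorem exists_pump_decomposition [Fintype V] (S T : Set V) {w : List A}
    (hw : 2 ^ (2 * Fintype.card V) ≤ w.length) :
    ∃ α β γ, w = α ++ β ++ γ ∧ β ≠ [] ∧
      G.transSet S (α ++ β) = G.transSet S α ∧ G.transSet T (α ++ β) = G.transSet T α := by
  classical
  let f : Fin (w.length + 1) → Set V × Set V :=
    fun i => (G.transSet S (w.take i), G.transSet T (w.take i))
  have hcard : Fintype.card (Set V × Set V) < Fintype.card (Fin (w.length + 1)) := by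
    simp only [Fintype.card_prod, Fintype.card_set, Fintype.card_fin, ← pow_add, ← two_mul]
    omega
  obtain ⟨i, j, hne, hfij⟩ := Fintype.exists_ne_map_eq_of_card_lt f hcard
  wlog hij : i < j generalizing i j
  · exact this j i hne.symm hfij.symm (lt_of_le_of_ne (not_lt.1 hij) hne.symm)
  have hij' : (i : ℕ) < j := hij
  have htake : w.take i ++ (w.take j).drop i = w.take j := by
    conv_rhs => rw [← List.take_append_drop i (w.take j), List.take_take, min_eq_left hij'.le]
  refine ⟨w.take i, (w.take j).drop i, w.drop j, ?_, ?_, ?_, ?_⟩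
  · rw [htake, List.take_append_drop]
  · rw [← List.length_pos_iff, List.length_drop, List.length_take]
    omega
  · rw [htake]; exact (Prod.ext_iff.1 hfij).1.symm
  · rw [htake]; exact (Prod.ext_iff.1 hfij).2.symm

theorem exists_long_word_transSet_eq [Fintype V] (S T : Set V) {w : List A}
    (hw : 2 ^ (2 * Fintype.card V) ≤ w.length) (M : ℕ) :
    ∃ w', M ≤ w'.length ∧ G.transSet S w' = G.transSet S w ∧
      G.transSet T w' = G.transSet T w := by
  obtain ⟨α, β, γ, rfl, hβ, hS, hT⟩ := exists_pump_decomposition (G := G) S T hw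
  have pumped : ∀ R : Set V, G.transSet R (α ++ β) = G.transSet R α →
      G.transSet R (α ++ (List.replicate M β).flatten ++ γ) = G.transSet R (α ++ β ++ γ) := by
    intro R hR
    have hfix : G.transSet (G.transSet R α) β = G.transSet R α := by rw [← transSet_append, hR]
    rw [transSet_append R (α ++ _), transSet_append R α, transSet_flatten_replicate hfix,
      transSet_append R (α ++ β), hR]
  refine ⟨α ++ (List.replicate M β).flatten ++ γ, ?_, pumped S hS, pumped T hT⟩
  have := List.length_pos_of_ne_nil hβ
  simp only [List.length_append, List.length_flatten, List.map_replicate, List.sum_replicate,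
    smul_eq_mul]
  nlinarith

theorem walk_window {v : ℤ → V} {x : ℤ → A} (hv : ∀ j, G.Edge (v j) (x j) (v (j + 1)))
    (i : ℤ) (L : ℕ) : G.Walk (v i) (window x i L) (v (i + L)) := by
  induction L generalizing i with
  | zero => simp [window, Walk]
  | succ L ih =>
    rw [window_succ, show i + ((L + 1 : ℕ) : ℤ) = i + 1 + L by push_cast; ring]
    exact ⟨v (i + 1), hv i, ih (i + 1)⟩

theorem Walk.exists_path_window {x : ℤ → A} {i : ℤ} {L : ℕ} {p q : V}
    (h : G.Walk p (window x i L) q) :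
    ∃ v : ℤ → V, v i = p ∧ ∀ j, i ≤ j → j < i + L → G.Edge (v j) (x j) (v (j + 1)) := by
  induction L generalizing i p with
  | zero => exact ⟨fun _ => p, rfl, fun j h1 h2 => by omega⟩
  | succ L ih =>
    rw [window_succ] at h
    obtain ⟨r, he, hw⟩ := h
    obtain ⟨v, hvi, hv⟩ := ih hw
    classical
    refine ⟨Function.update v i p, by simp, fun j h1 h2 => ?_⟩
    rcases h1.lt_or_eq with h1 | rfl
    · rw [Function.update_of_ne h1.ne', Function.update_of_ne (by omega)]
      exact hv j (by omega) (by push_cast at h2; omega)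
    · rw [Function.update_self, Function.update_of_ne (by omega), hvi]
      exact he

def reverse (G : LabeledGraph V A) : LabeledGraph V A :=
  ⟨fun p a q => G.Edge q a p⟩

theorem exists_ray (hout : ∀ q, ∃ a r, G.Edge q a r) (q : V) :
    ∃ (v : ℕ → V) (x : ℕ → A), v 0 = q ∧ ∀ n, G.Edge (v n) (x n) (v (n + 1)) := by
  choose a r hr using hout
  exact ⟨fun n => r^[n] q, fun n => a (r^[n] q), rfl,
    fun n => by
      show G.Edge (r^[n] q) (a (r^[n] q)) (r^[n + 1] q)
      rw [Function.iterate_succ_apply']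
      exact hr _⟩

theorem Walk.exists_ray (hout : ∀ q, ∃ a r, G.Edge q a r) {p q : V} {w : List A}
    (h : G.Walk p w q) :
    ∃ (v : ℕ → V) (x : ℕ → A), v 0 = p ∧ (∀ n, G.Edge (v n) (x n) (v (n + 1))) ∧
      ∀ t (ht : t < w.length), x t = w[t] := by
  induction w generalizing p with
  | nil =>
    obtain ⟨v, x, hv0, hv⟩ := LabeledGraph.exists_ray hout q
    exact ⟨v, x, hv0.trans h.symm, hv, by simp⟩
  | cons a w ih =>
    obtain ⟨r, he, hw⟩ := h
    obtain ⟨v, x, hv0, hv, hx⟩ := ih hw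
    refine ⟨fun | 0 => p | n + 1 => v n, fun | 0 => a | n + 1 => x n, rfl, ?_, ?_⟩
    · rintro (_ | n)
      · rwa [← hv0] at he
      · exact hv n
    · rintro (_ | t) ht
      · rfl
      · exact hx t (by simpa using ht)

theorem mem_shift_of_rays {f b : ℕ → V} {x y : ℕ → A} (h0 : f 0 = b 0)
    (hf : ∀ n, G.Edge (f n) (x n) (f (n + 1))) (hb : ∀ n, G.Edge (b (n + 1)) (y n) (b n)) :
    (fun j : ℤ => if 0 ≤ j then x j.toNat else y (-j - 1).toNat) ∈ G.shift := by
  refine ⟨fun j => if 0 ≤ j then f j.toNat else b (-j).toNat, fun j => ?_⟩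
  rcases lt_trichotomy j (-1) with hj | rfl | hj
  · simp only [if_neg (show ¬ 0 ≤ j by omega), if_neg (show ¬ 0 ≤ j + 1 by omega)]
    rw [show (-j).toNat = (-j - 1).toNat + 1 by omega,
      show (-(j + 1)).toNat = (-j - 1).toNat by omega]
    exact hb _
  · simpa [h0] using hb 0
  · simp only [if_pos (show 0 ≤ j by omega), if_pos (show 0 ≤ j + 1 by omega)]
    rw [show (j + 1).toNat = j.toNat + 1 by omega]
    exact hf _

theorem Walk.exists_mem_shift (hess : G.Essential) {p q : V} {w : List A} (h : G.Walk p w q) :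
    ∃ x ∈ G.shift, AppearsIn w x := by
  obtain ⟨f, x, hf0, hf, hx⟩ := h.exists_ray fun q => (hess q).1
  obtain ⟨b, y, hb0, hb⟩ := LabeledGraph.exists_ray (G := G.reverse) (fun q => (hess q).2) p
  refine ⟨_, mem_shift_of_rays (hf0.trans hb0.symm) hf hb, 0, fun t => ?_⟩
  simp [hx]

theorem mem_lang_shift_iff (hess : G.Essential) {w : List A} :
    w ∈ lang G.shift ↔ ∃ p q, G.Walk p w q := by
  constructor
  · rintro ⟨x, ⟨v, hv⟩, happ⟩
    obtain ⟨i, hi⟩ := appearsIn_iff_window.1 happ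
    exact ⟨_, _, hi ▸ walk_window hv i w.length⟩
  · rintro ⟨p, q, h⟩
    exact h.exists_mem_shift hess

theorem mem_lang_shift_iff_nonempty (hess : G.Essential) {w : List A} :
    w ∈ lang G.shift ↔ (G.transSet Set.univ w).Nonempty := by
  rw [mem_lang_shift_iff hess]
  exact ⟨fun ⟨p, q, h⟩ => ⟨q, p, trivial, h⟩, fun ⟨q, p, _, h⟩ => ⟨p, q, h⟩⟩

theorem mStep_two_pow_card [Fintype V] (hess : G.Essential) {M : ℕ} (hM : MStep G.shift M) :
    MStep G.shift (2 ^ (2 * Fintype.card V)) := by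
  intro w hw hlen
  refine ⟨hw, fun u v huw hwv => ?_⟩
  obtain ⟨w', hlen', hS, hT⟩ :=
    exists_long_word_transSet_eq (G := G) Set.univ (G.transSet Set.univ u) hlen M
  simp only [mem_lang_shift_iff_nonempty hess, transSet_append] at hw huw hwv ⊢
  have := (hM w' (by rwa [mem_lang_shift_iff_nonempty hess, hS]) hlen').2 u v
    (by rwa [mem_lang_shift_iff_nonempty hess, transSet_append, hT])
    (by rwa [mem_lang_shift_iff_nonempty hess, transSet_append, hS])
  rwa [mem_lang_shift_iff_nonempty hess, transSet_append, transSet_append, hT] at this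

theorem mem_shift_of_forall_walk [Finite V] {x : ℤ → A}
    (h : ∀ i L, ∃ p q, G.Walk p (window x i L) q) : x ∈ G.shift := by
  let _ : TopologicalSpace V := ⊥
  have : DiscreteTopology V := ⟨rfl⟩
  let C : ℕ → Set (ℤ → V) := fun k =>
    { v | ∀ j, -(k : ℤ) ≤ j → j < k → G.Edge (v j) (x j) (v (j + 1)) }
  have hne : ∀ k, (C k).Nonempty := fun k => by
    obtain ⟨p, q, hw⟩ := h (-k) (2 * k)
    obtain ⟨v, -, hv⟩ := hw.exists_path_window
    exact ⟨v, fun j h1 h2 => hv j h1 (by push_cast; omega)⟩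
  have hclosed : ∀ k, IsClosed (C k) := fun k => by
    simp only [C, Set.ofPred_forall]
    exact isClosed_iInter fun j => isClosed_iInter fun _ => isClosed_iInter fun _ =>
      (isClosed_discrete {e : V × V | G.Edge e.1 (x j) e.2}).preimage
        (by fun_prop : Continuous fun v : ℤ → V => (v j, v (j + 1)))
  have hanti : ∀ k, C (k + 1) ⊆ C k := fun k v hv j h1 h2 =>
    hv j (by push_cast; omega) (by push_cast; omega)
  obtain ⟨v, hv⟩ := IsCompact.nonempty_iInter_of_sequence_nonempty_isCompact_isClosed C hanti hne
    (hclosed 0).isCompact hclosed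
  exact ⟨v, fun j => Set.mem_iInter.1 hv (j.natAbs + 1) j (by omega) (by omega)⟩

theorem isSFT_shift_of_mStep [Finite V] [Finite A] (hess : G.Essential) {M : ℕ}
    (hM : MStep G.shift M) : IsSFT G.shift := by
  refine ⟨{f | f.length = M + 1 ∧ f ∉ lang G.shift},
    (List.finite_length_eq A (M + 1)).subset fun f hf => hf.1, ?_⟩
  ext x
  refine ⟨fun hx f hf happ => hf.2 ⟨x, hx, happ⟩,
    fun hx => mem_shift_of_forall_walk fun i L => ?_⟩
  rw [← mem_lang_shift_iff hess]
  refine hM.window_mem_lang (fun i => ?_) i L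
  by_contra hnot
  exact hx _ ⟨by simp, hnot⟩ (appearsIn_iff_window.2 ⟨i, by simp⟩)

end LabeledGraph

theorem stmt18_general {V A : Type} [Fintype V] [Fintype A] (G : LabeledGraph V A)
    (hess : G.Essential)
    (n : ℕ) (hn : n = Fintype.card V) :
    IsSFT G.shift ↔ MStep G.shift (2 ^ (2 * n)) := by
  subst hn
  constructor
  · intro hsft
    obtain ⟨M, hM⟩ := hsft.exists_mStep
    exact LabeledGraph.mStep_two_pow_card hess hM
  · exact LabeledGraph.isSFT_shift_of_mStep hess

/-- Let `G` be a deterministic presentation over a finite alphabet with `n`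
vertices. Then `⟨G⟩` is a shift of finite type iff `⟨G⟩` is `2^(2n)`-step. -/
theorem stmt18 {V A : Type} [Fintype V] [Fintype A] (G : LabeledGraph V A)
    (hdet : G.Deterministic) (hess : G.Essential)
    (n : ℕ) (hn : n = Fintype.card V) :
    IsSFT G.shift ↔ MStep G.shift (2 ^ (2 * n)) :=
  stmt18_general G hess n hn
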